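/- arXiv:1512.02016 — 3 statements merged into one kernel-verified Lean document; each statement's English description precedes it below -/
import Mathlib

section
/- For every real number c > 0 and every real number ζ, the following scale-mixture identity holds: exp(−2c·max(0, ζ)) = ∫₀^∞ (2πλ)^{−1/2} · exp(−(λ + cζ)²/(2λ)) dλ, where the integral is over λ ∈ (0, ∞) with respect to Lebesgue measure. -/
/-!
Substituting `λ = t²` turns the integral into `(2/√(2π)) ∫₀^∞ exp(-(t + a/t)²/2) dt` with
`a = cζ`, and `(t + a/t)² = (t - |a|/t)² + 4 max 0 a`. The Cauchy–Schlömilch substitution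
`u = t - b/t` then evaluates `∫₀^∞ exp(-(t - b/t)²/2) dt = √(2π)/2` for every `b ≥ 0`: the
reflection `t ↦ b/t` preserves the integral and turns the weight `1` into `b/t²`, so twice the
integral carries the weight `1 + b/t² = du/dt` and equals the full Gaussian integral.
-/

open MeasureTheory Real Set

section ChangeOfVariables

variable {E : Type*} [NormedAddCommGroup E] [NormedSpace ℝ E] {b : ℝ}

lemma strictMonoOn_sub_div (hb : 0 ≤ b) : StrictMonoOn (fun t : ℝ => t - b / t) (Ioi 0) :=
  fun x hx y _ hxy => by
    have := div_le_div_of_nonneg_left hb hx hxy.le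
    simp only; linarith

lemma image_sub_div_Ioi (hb : 0 < b) : (fun t : ℝ => t - b / t) '' Ioi 0 = univ := by
  refine eq_univ_of_forall fun u => ?_
  -- the positive root of `t² - u t - b = 0`
  set s := √(u ^ 2 + 4 * b)
  have hs : s ^ 2 = u ^ 2 + 4 * b := sq_sqrt (by positivity)
  have hus : |u| < s := by
    rw [← sqrt_sq_eq_abs]; exact sqrt_lt_sqrt (sq_nonneg u) (by linarith)
  have ht : 0 < (u + s) / 2 := by linarith [neg_abs_le u]
  refine ⟨(u + s) / 2, ht, ?_⟩
  have : b / ((u + s) / 2) = (s - u) / 2 := by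
    rw [div_eq_iff ht.ne']; nlinarith
  simp only [this]
  ring

lemma hasDerivAt_sub_div {t : ℝ} (ht : t ≠ 0) :
    HasDerivAt (fun t : ℝ => t - b / t) (1 + b / t ^ 2) t := by
  simp only [div_eq_mul_inv]
  exact ((hasDerivAt_id' t).sub ((hasDerivAt_inv ht).const_mul b)).congr_deriv (by ring)

lemma hasDerivAt_const_div {t : ℝ} (ht : t ≠ 0) :
    HasDerivAt (fun t : ℝ => b / t) (-(b / t ^ 2)) t := by
  simp only [div_eq_mul_inv]
  exact ((hasDerivAt_inv ht).const_mul b).congr_deriv (by ring)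

lemma image_const_div_Ioi (hb : 0 < b) : (fun t : ℝ => b / t) '' Ioi 0 = Ioi 0 := by
  refine Subset.antisymm (image_subset_iff.2 fun t ht => div_pos hb ht) fun t ht => ?_
  exact ⟨b / t, div_pos hb ht, div_div_cancel₀ hb.ne'⟩

lemma injOn_const_div (hb : 0 < b) : InjOn (fun t : ℝ => b / t) (Ioi 0) :=
  fun x _ y _ h => by simpa [div_eq_mul_inv, hb.ne'] using h

lemma integral_Ioi_comp_sub_div (F : ℝ → E) (hb : 0 < b) :
    ∫ t in Ioi 0, (1 + b / t ^ 2) • F (t - b / t) = ∫ u, F u := by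
  conv_rhs => rw [← setIntegral_univ, ← image_sub_div_Ioi hb]
  rw [integral_image_eq_integral_abs_deriv_smul
    measurableSet_Ioi (fun t ht => (hasDerivAt_sub_div (ne_of_gt ht)).hasDerivWithinAt)
    (strictMonoOn_sub_div hb.le).injOn]
  refine setIntegral_congr_fun measurableSet_Ioi fun t _ => ?_
  rw [abs_of_pos (by positivity)]

lemma integrableOn_Ioi_comp_sub_div_iff (F : ℝ → E) (hb : 0 < b) :
    IntegrableOn (fun t => (1 + b / t ^ 2) • F (t - b / t)) (Ioi 0) ↔ Integrable F := by
  conv_rhs => rw [← integrableOn_univ, ← image_sub_div_Ioi hb]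
  rw [integrableOn_image_iff_integrableOn_abs_deriv_smul measurableSet_Ioi
      (fun t ht => (hasDerivAt_sub_div (ne_of_gt ht)).hasDerivWithinAt)
      (strictMonoOn_sub_div hb.le).injOn]
  refine integrableOn_congr_fun (fun t _ => ?_) measurableSet_Ioi
  rw [abs_of_pos (by positivity)]

lemma integral_Ioi_comp_const_div (F : ℝ → E) (hb : 0 < b) :
    ∫ t in Ioi 0, (b / t ^ 2) • F (b / t) = ∫ t in Ioi 0, F t := by
  conv_rhs => rw [← image_const_div_Ioi hb]
  rw [integral_image_eq_integral_abs_deriv_smul measurableSet_Ioi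
    (fun t ht => (hasDerivAt_const_div (ne_of_gt ht)).hasDerivWithinAt) (injOn_const_div hb)]
  refine setIntegral_congr_fun measurableSet_Ioi fun t (ht : 0 < t) => ?_
  rw [abs_neg, abs_of_pos (by positivity)]

lemma integrableOn_Ioi_comp_const_div_iff (F : ℝ → E) (hb : 0 < b) :
    IntegrableOn (fun t => (b / t ^ 2) • F (b / t)) (Ioi 0) ↔ IntegrableOn F (Ioi 0) := by
  conv_rhs => rw [← image_const_div_Ioi hb]
  rw [integrableOn_image_iff_integrableOn_abs_deriv_smul measurableSet_Ioi
    (fun t ht => (hasDerivAt_const_div (ne_of_gt ht)).hasDerivWithinAt) (injOn_const_div hb)]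
  refine integrableOn_congr_fun (fun t (ht : 0 < t) => ?_) measurableSet_Ioi
  rw [abs_neg, abs_of_pos (by positivity)]

lemma integrableOn_Ioi_comp_sub_div {f : ℝ → E} (hf : Integrable f) (hb : 0 < b) :
    IntegrableOn (fun t => f (t - b / t)) (Ioi 0) := by
  have hweight : ∀ t : ℝ, 1 ≤ 1 + b / t ^ 2 := fun t => by
    have : 0 ≤ b / t ^ 2 := by positivity
    linarith
  have := ((integrableOn_Ioi_comp_sub_div_iff f hb).2 hf).bdd_smul 1
    (φ := fun t => (1 + b / t ^ 2)⁻¹)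
    (Measurable.aestronglyMeasurable (by fun_prop))
    (ae_of_all _ fun t => by
      rw [norm_inv, Real.norm_of_nonneg (by linarith [hweight t])]
      exact inv_le_one_of_one_le₀ (hweight t))
  refine this.congr (ae_of_all _ fun t => ?_)
  simp only [Pi.smul_apply', smul_smul]
  rw [inv_mul_cancel₀ (by linarith [hweight t]), one_smul]

theorem two_smul_integral_Ioi_comp_sub_div {f : ℝ → E} (hf : Integrable f)
    (hf_even : ∀ u, f (-u) = f u) (hb : 0 < b) :
    (2 : ℝ) • ∫ t in Ioi 0, f (t - b / t) = ∫ u, f u := by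
  have hint := integrableOn_Ioi_comp_sub_div hf hb
  -- the reflection `t ↦ b / t` maps `t - b / t` to its negative
  have hreflect : ∀ t ∈ Ioi (0 : ℝ),
      (b / t ^ 2) • f (b / t - b / (b / t)) = (b / t ^ 2) • f (t - b / t) := fun t _ => by
    rw [div_div_cancel₀ hb.ne', ← neg_sub, hf_even]
  have hint' : IntegrableOn (fun t => (b / t ^ 2) • f (t - b / t)) (Ioi 0) :=
    ((integrableOn_Ioi_comp_const_div_iff _ hb).2 hint).congr_fun hreflect measurableSet_Ioi
  calc (2 : ℝ) • ∫ t in Ioi 0, f (t - b / t)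
      = (∫ t in Ioi 0, f (t - b / t)) + ∫ t in Ioi 0, (b / t ^ 2) • f (t - b / t) := by
        rw [two_smul, ← integral_Ioi_comp_const_div _ hb,
          setIntegral_congr_fun measurableSet_Ioi hreflect]
    _ = ∫ t in Ioi 0, (1 + b / t ^ 2) • f (t - b / t) := by
        rw [← integral_add hint hint']
        simp only [add_smul, one_smul]
    _ = ∫ u, f u := integral_Ioi_comp_sub_div f hb

end ChangeOfVariables

lemma integral_exp_neg_sq_div_two : ∫ x, exp (-x ^ 2 / 2) = √(2 * π) := by
  simpa [neg_div, div_eq_inv_mul, div_inv_eq_mul, mul_comm] using integral_gaussian (1 / 2)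

lemma integral_Ioi_exp_neg_sq_sub_div {b : ℝ} (hb : 0 ≤ b) :
    ∫ t in Ioi 0, exp (-(t - b / t) ^ 2 / 2) = √(2 * π) / 2 := by
  rcases hb.eq_or_lt with rfl | hb
  · simpa [neg_div, div_eq_inv_mul, div_inv_eq_mul, mul_comm] using integral_gaussian_Ioi (1 / 2)
  · have h := two_smul_integral_Ioi_comp_sub_div (f := fun x => exp (-x ^ 2 / 2))
      (by simpa [neg_div, div_eq_inv_mul] using integrable_exp_neg_mul_sq (b := 1 / 2) (by norm_num))
      (fun x => by simp only [even_two, Even.neg_pow]) hb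
    rw [integral_exp_neg_sq_div_two, smul_eq_mul] at h
    linarith

lemma sq_add_div_eq_sq_sub_abs_div_add (a : ℝ) {t : ℝ} (ht : t ≠ 0) :
    (t + a / t) ^ 2 = (t - |a| / t) ^ 2 + 4 * max 0 a := by
  have hpos : a + |a| = 2 * max 0 a := by
    rcases le_total 0 a with h | h
    · rw [abs_of_nonneg h, max_eq_right h]; ring
    · rw [abs_of_nonpos h, max_eq_left h]; ring
  have hsq : |a| ^ 2 = a ^ 2 := sq_abs a
  field_simp
  linear_combination (2 * t ^ 2) * hpos - hsq

lemma integral_Ioi_exp_neg_sq_add_div (a : ℝ) :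
    ∫ t in Ioi 0, exp (-(t + a / t) ^ 2 / 2) = exp (-2 * max 0 a) * (√(2 * π) / 2) := by
  rw [← integral_Ioi_exp_neg_sq_sub_div (abs_nonneg a), ← integral_const_mul]
  refine setIntegral_congr_fun measurableSet_Ioi fun t (ht : 0 < t) => ?_
  rw [sq_add_div_eq_sq_sub_abs_div_add a ht.ne', ← exp_add]
  ring_nf

lemma two_mul_rpow_smul_integrand_eq (a : ℝ) {t : ℝ} (ht : 0 < t) :
    (2 * t ^ ((2 : ℝ) - 1)) • ((2 * π * t ^ (2 : ℝ)) ^ (-(1 : ℝ) / 2) *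
        exp (-(t ^ (2 : ℝ) + a) ^ 2 / (2 * t ^ (2 : ℝ)))) =
      2 / √(2 * π) * exp (-(t + a / t) ^ 2 / 2) := by
  have hrpow : (2 * π * t ^ 2) ^ (-(1 : ℝ) / 2) = (√(2 * π) * t)⁻¹ := by
    rw [neg_div, rpow_neg (by positivity), ← sqrt_eq_rpow, sqrt_mul (by positivity),
      sqrt_sq ht.le]
  have hexp : -(t ^ 2 + a) ^ 2 / (2 * t ^ 2) = -(t + a / t) ^ 2 / 2 := by
    field_simp
  rw [show (2 : ℝ) - 1 = 1 by norm_num, rpow_one, rpow_two, hrpow, hexp, smul_eq_mul]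
  field_simp

/-- Scale-mixture-of-Gaussians representation of the exponentiated hinge loss
`exp (-2c·(ζ)₊)` (Polson–Scott data augmentation, hinge-loss case of Lemma 1). -/
theorem exp_neg_two_mul_max_eq_integral (c ζ : ℝ) (hc : 0 < c) :
    Real.exp (-2 * c * max 0 ζ) =
      ∫ l in Set.Ioi (0 : ℝ),
        (2 * Real.pi * l) ^ (-(1 : ℝ) / 2) * Real.exp (-(l + c * ζ) ^ 2 / (2 * l)) := by
  rw [← integral_comp_rpow_Ioi_of_pos two_pos, setIntegral_congr_fun measurableSet_Ioi
    fun t ht => two_mul_rpow_smul_integrand_eq (c * ζ) ht, integral_const_mul,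
    integral_Ioi_exp_neg_sq_add_div, mul_assoc, mul_max_of_nonneg _ _ hc.le, mul_zero]
  field_simp
end

section
/- Let b > 0, let (g_d)_{d≥1} be an i.i.d. sequence of random variables each with the Gamma distribution with shape b and rate 1, and let X = (1/(2π²)) Σ_{d=1}^{∞} g_d/((d − 1/2)²). Then for every real number t ≥ 0: E[exp(−tX)] = cosh(√(t/2))^{−b}. -/
/-!
If `g ~ Gamma(b, 1)` then `E[exp(-c g)] = (1 + c)^(-b)` for `c ≥ 0`, so by independence the
partial sums of `t X = Σ c_d g_d`, with `c_d = t / (2π² (d + 1/2)²)`, have Laplace transform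
`∏_{d<n} (1 + c_d)^(-b)`. The series has finite mean, hence converges almost surely, and its
terms are nonnegative, so dominated convergence (with bound `1`) passes to the limit. Euler's
product `cosh (π x) = ∏_d (1 + x² / (d + 1/2)²)`, obtained from the sine product through
`sin 2w = 2 sin w cos w`, identifies the limit with `cosh (√(t/2))^(-b)`.
-/

open MeasureTheory Real ProbabilityTheory Filter Topology Finset
open scoped ENNReal

theorem Finset.prod_range_two_mul {M : Type*} [CommMonoid M] (f : ℕ → M) (n : ℕ) :
    ∏ i ∈ range (2 * n), f i =
      (∏ i ∈ range n, f (2 * i)) * ∏ i ∈ range n, f (2 * i + 1) := by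
  induction n with
  | zero => simp
  | succ n ih =>
    rw [Nat.mul_succ, prod_range_succ, prod_range_succ, ih, prod_range_succ, prod_range_succ]
    ac_rfl

theorem Complex.tendsto_euler_cos_prod {z : ℂ} (hz : Complex.sin (π * z) ≠ 0) :
    Tendsto (fun n : ℕ => ∏ j ∈ range n, (1 - z ^ 2 / ((j : ℂ) + 1 / 2) ^ 2))
      atTop (𝓝 (Complex.cos (π * z))) := by
  have hsin := Complex.tendsto_euler_sin_prod z
  have hquot := ((Complex.tendsto_euler_sin_prod (2 * z)).comp
    (tendsto_id.const_mul_atTop' two_pos)).div (hsin.const_mul 2) (mul_ne_zero two_ne_zero hz)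
  rw [show π * (2 * z) = 2 * (π * z) by ring, Complex.sin_two_mul,
    mul_assoc, mul_div_mul_left _ _ (two_ne_zero' ℂ), mul_div_cancel_left₀ _ hz] at hquot
  refine hquot.congr' ?_
  filter_upwards [hsin.eventually_ne hz] with n hn
  -- In the sine product for `2 z`, odd indices give the sine product for `z`, even ones the
  -- cosine factors.
  have hodd (j : ℕ) : 1 - (2 * z) ^ 2 / (((2 * j + 1 : ℕ) : ℂ) + 1) ^ 2
      = 1 - z ^ 2 / ((j : ℂ) + 1) ^ 2 := by
    rw [show ((2 * j + 1 : ℕ) : ℂ) + 1 = 2 * ((j : ℂ) + 1) by push_cast; ring,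
      mul_pow, mul_pow, mul_div_mul_left _ _ (by norm_num)]
  have heven (j : ℕ) : 1 - (2 * z) ^ 2 / (((2 * j : ℕ) : ℂ) + 1) ^ 2
      = 1 - z ^ 2 / ((j : ℂ) + 1 / 2) ^ 2 := by
    rw [show ((2 * j : ℕ) : ℂ) + 1 = 2 * ((j : ℂ) + 1 / 2) by push_cast; ring,
      mul_pow, mul_pow, mul_div_mul_left _ _ (by norm_num)]
  simp only [Pi.div_apply, Function.comp_apply, id, prod_range_two_mul, hodd, heven]
  rw [div_eq_iff (mul_ne_zero two_ne_zero hn)]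
  ring

theorem Real.tendsto_euler_cosh_prod (x : ℝ) :
    Tendsto (fun n : ℕ => ∏ j ∈ range n, (1 + x ^ 2 / ((j : ℝ) + 1 / 2) ^ 2))
      atTop (𝓝 (cosh (π * x))) := by
  rcases eq_or_ne x 0 with rfl | hx
  · simp
  have hpx : (π : ℂ) * (x * Complex.I) = ((π * x : ℝ) : ℂ) * Complex.I := by push_cast; ring
  have hsin : Complex.sin (π * (x * Complex.I)) ≠ 0 := by
    rw [hpx, Complex.sin_mul_I, ← Complex.ofReal_sinh]
    exact mul_ne_zero (Complex.ofReal_ne_zero.2 (sinh_ne_zero.2 (by positivity))) Complex.I_ne_zero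
  have h := (Complex.continuous_re.tendsto _).comp (Complex.tendsto_euler_cos_prod hsin)
  rw [hpx, Complex.cos_mul_I, ← Complex.ofReal_cosh, Complex.ofReal_re] at h
  refine h.congr fun n => ?_
  have hprod : ∏ j ∈ range n, (1 - ((x : ℂ) * Complex.I) ^ 2 / ((j : ℂ) + 1 / 2) ^ 2)
      = ((∏ j ∈ range n, (1 + x ^ 2 / ((j : ℝ) + 1 / 2) ^ 2) : ℝ) : ℂ) := by
    push_cast
    refine prod_congr rfl fun j _ => ?_
    rw [mul_pow, Complex.I_sq]
    ring
  rw [Function.comp_apply, hprod, Complex.ofReal_re]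

theorem Real.tendsto_euler_cosh_prod_rpow (x p : ℝ) :
    Tendsto (fun n : ℕ => ∏ j ∈ range n, (1 + x ^ 2 / ((j : ℝ) + 1 / 2) ^ 2) ^ p)
      atTop (𝓝 (cosh (π * x) ^ p)) := by
  refine ((tendsto_euler_cosh_prod x).rpow_const (Or.inl (cosh_pos _).ne')).congr fun n => ?_
  exact (finsetProd_rpow _ _ (fun j _ => by positivity) p).symm

namespace ProbabilityTheory

lemma measurable_gammaPDF (a r : ℝ) : Measurable (gammaPDF a r) :=
  (measurable_gammaPDFReal a r).ennreal_ofReal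

variable {a r : ℝ}

lemma ae_nonneg_gammaMeasure : ∀ᵐ x ∂gammaMeasure a r, 0 ≤ x := by
  simp only [ae_iff, not_le]
  exact (withDensity_apply _ measurableSet_Iio).trans (lintegral_gammaPDF_of_nonpos le_rfl)

/-- Tilting by `exp (s x)` turns the rate-`r` density into a multiple of the rate-`(r - s)` one. -/
lemma lintegral_exp_mul_gammaMeasure (ha : 0 < a) (hr : 0 < r) {s : ℝ} (hs : s < r) :
    ∫⁻ x, ENNReal.ofReal (exp (s * x)) ∂gammaMeasure a r =
      ENNReal.ofReal ((r / (r - s)) ^ a) := by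
  have hrs : 0 < r - s := sub_pos.2 hs
  have htilt (x : ℝ) : gammaPDF a r x * ENNReal.ofReal (exp (s * x))
      = ENNReal.ofReal ((r / (r - s)) ^ a) * gammaPDF a (r - s) x := by
    rcases lt_or_ge x 0 with hx | hx
    · simp [gammaPDF_of_neg hx]
    rw [gammaPDF_of_nonneg hx, gammaPDF_of_nonneg hx, ← ENNReal.ofReal_mul (by positivity),
      ← ENNReal.ofReal_mul (by positivity)]
    congr 1
    have hpow : r ^ a = (r / (r - s)) ^ a * (r - s) ^ a := by
      rw [← mul_rpow (by positivity) hrs.le, div_mul_cancel₀ _ hrs.ne']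
    have hexp : exp (-(r * x)) * exp (s * x) = exp (-((r - s) * x)) := by
      rw [← exp_add]; ring_nf
    rw [hpow, mul_assoc, hexp]
    ring
  rw [gammaMeasure,
    lintegral_withDensity_eq_lintegral_mul _ (measurable_gammaPDF a r) (by fun_prop)]
  simp only [Pi.mul_apply, htilt]
  rw [lintegral_const_mul _ (measurable_gammaPDF a (r - s)),
    lintegral_gammaPDF_eq_one ha hrs, mul_one]

lemma mgf_id_gammaMeasure (ha : 0 < a) (hr : 0 < r) {s : ℝ} (hs : s < r) :
    mgf id (gammaMeasure a r) s = (r / (r - s)) ^ a := by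
  rw [mgf, integral_eq_lintegral_of_nonneg_ae (ae_of_all _ fun x => (exp_pos _).le)
    (by fun_prop)]
  simp only [id, lintegral_exp_mul_gammaMeasure ha hr hs]
  exact ENNReal.toReal_ofReal (rpow_nonneg (div_nonneg hr.le (sub_pos.2 hs).le) a)

/-- The first moment is dominated by a multiple of the moment generating function at `r / 2`. -/
lemma lintegral_ofReal_gammaMeasure_lt_top (ha : 0 < a) (hr : 0 < r) :
    ∫⁻ x, ENNReal.ofReal x ∂gammaMeasure a r < ∞ := by
  have hbound (x : ℝ) : x ≤ 2 / r * exp (r / 2 * x) :=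
    calc x = 2 / r * (r / 2 * x) := by field_simp
      _ ≤ 2 / r * exp (r / 2 * x) := by gcongr; linarith [add_one_le_exp (r / 2 * x)]
  calc ∫⁻ x, ENNReal.ofReal x ∂gammaMeasure a r
      ≤ ∫⁻ x, ENNReal.ofReal (2 / r) * ENNReal.ofReal (exp (r / 2 * x)) ∂gammaMeasure a r :=
        lintegral_mono fun x => by
          rw [← ENNReal.ofReal_mul (by positivity)]
          exact ENNReal.ofReal_le_ofReal (hbound x)
    _ < ∞ := by
        rw [lintegral_const_mul _ (by fun_prop),
          lintegral_exp_mul_gammaMeasure ha hr (by linarith)]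
        exact ENNReal.mul_lt_top ENNReal.ofReal_lt_top ENNReal.ofReal_lt_top

end ProbabilityTheory

section RandomSeries

variable {Ω : Type*} [MeasurableSpace Ω] {μ : Measure Ω}

theorem ae_summable_const_mul_of_map_eq {ι : Type*} [Countable ι] {f : ι → Ω → ℝ}
    {ν : Measure ℝ} {c : ι → ℝ} (hf : ∀ i, Measurable (f i))
    (hmap : ∀ i, μ.map (f i) = ν) (hnonneg : ∀ᵐ ω ∂μ, ∀ i, 0 ≤ f i ω)
    (hν : ∫⁻ x, ENNReal.ofReal x ∂ν ≠ ∞)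
    (hc : ∀ i, 0 ≤ c i) (hcs : Summable c) :
    ∀ᵐ ω ∂μ, Summable fun i => c i * f i ω := by
  have hmeas (i : ι) : Measurable fun ω => ENNReal.ofReal (c i * f i ω) :=
    ((hf i).const_mul _).ennreal_ofReal
  have hmean (i : ι) : ∫⁻ ω, ENNReal.ofReal (c i * f i ω) ∂μ
      = ENNReal.ofReal (c i) * ∫⁻ x, ENNReal.ofReal x ∂ν := by
    simp_rw [ENNReal.ofReal_mul (hc i)]
    rw [lintegral_const_mul _ (hf i).ennreal_ofReal, ← hmap i,
      lintegral_map ENNReal.measurable_ofReal (hf i)]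
  have hfin : ∀ᵐ ω ∂μ, ∑' i, ENNReal.ofReal (c i * f i ω) < ∞ := by
    refine ae_lt_top' (Measurable.tsum hmeas).aemeasurable ?_
    rw [lintegral_tsum fun i => (hmeas i).aemeasurable]
    simp_rw [hmean]
    rw [ENNReal.tsum_mul_right, ← ENNReal.ofReal_tsum_of_nonneg hc hcs]
    exact ENNReal.mul_ne_top ENNReal.ofReal_ne_top hν
  filter_upwards [hfin, hnonneg] with ω hω h0
  exact (ENNReal.summable_toReal hω.ne).congr fun i =>
    ENNReal.toReal_ofReal (mul_nonneg (hc i) (h0 i))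

theorem tendsto_integral_exp_neg_sum_range [IsFiniteMeasure μ] {Y : ℕ → Ω → ℝ}
    (hY : ∀ n, AEMeasurable (Y n) μ) (hnonneg : ∀ᵐ ω ∂μ, ∀ n, 0 ≤ Y n ω)
    (hsum : ∀ᵐ ω ∂μ, Summable fun n => Y n ω) :
    Tendsto (fun n => ∫ ω, exp (-∑ i ∈ range n, Y i ω) ∂μ) atTop
      (𝓝 (∫ ω, exp (-∑' i, Y i ω) ∂μ)) := by
  refine tendsto_integral_of_dominated_convergence (fun _ => 1) (fun n => ?_)
    (integrable_const 1) (fun n => ?_) ?_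
  · exact (Finset.aemeasurable_fun_sum _ fun i _ => hY i).neg.exp.aestronglyMeasurable
  · filter_upwards [hnonneg] with ω h0
    rw [norm_of_nonneg (exp_pos _).le, exp_le_one_iff, neg_nonpos]
    exact sum_nonneg fun i _ => h0 i
  · filter_upwards [hsum] with ω hω
    exact (continuous_exp.tendsto _).comp hω.hasSum.tendsto_sum_nat.neg

namespace ProbabilityTheory

theorem iIndepFun.integral_exp_neg_sum_mul_of_map_eq_gammaMeasure {ι : Type*}
    {g : ι → Ω → ℝ} {a r : ℝ} (hindep : iIndepFun g μ) (hmeas : ∀ i, Measurable (g i))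
    (hdist : ∀ i, μ.map (g i) = gammaMeasure a r) (ha : 0 < a) (hr : 0 < r) {c : ι → ℝ}
    (hc : ∀ i, -r < c i) (s : Finset ι) :
    ∫ ω, exp (-∑ i ∈ s, c i * g i ω) ∂μ = ∏ i ∈ s, (1 + c i / r) ^ (-a) := by
  have hind : iIndepFun (fun i ω => c i * g i ω) μ :=
    hindep.comp _ fun i => measurable_const_mul (c i)
  have hsum : ∫ ω, exp (-∑ i ∈ s, c i * g i ω) ∂μ
      = mgf (∑ i ∈ s, fun ω => c i * g i ω) μ (-1) := by
    simp [mgf, Finset.sum_apply]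
  rw [hsum, hind.mgf_sum fun i => (hmeas i).const_mul (c i)]
  refine prod_congr rfl fun i _ => ?_
  have hbase : r / (r - c i * -1) = (1 + c i / r)⁻¹ := by
    rw [mul_neg_one, sub_neg_eq_add, one_add_div hr.ne', inv_div]
  have hpos : 0 ≤ 1 + c i / r := by
    rw [one_add_div hr.ne']
    exact (div_pos (by linarith [hc i]) hr).le
  rw [mgf_const_mul, ← mgf_id_map (hmeas i).aemeasurable, hdist i,
    mgf_id_gammaMeasure ha hr (by linarith [hc i]), hbase, inv_rpow hpos, rpow_neg hpos]

end ProbabilityTheory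

end RandomSeries

/-- Laplace transform of the Polya-Gamma PG(b, 0) random variable
`X = (1/(2π²)) Σ_{d≥1} g_d/(d - 1/2)²` (indexed here by `d : ℕ`, so the term for `d`
is `g d/(d + 1/2)²`), where `(g_d)` are i.i.d. Gamma(b, 1): for every `t ≥ 0`,
`E[exp(-tX)] = cosh(√(t/2))^{-b}`. -/
theorem polya_gamma_laplace_transform {Ω : Type*} [MeasurableSpace Ω]
    (P : Measure Ω) [IsProbabilityMeasure P]
    (b : ℝ) (hb : 0 < b) (g : ℕ → Ω → ℝ)
    (hmeas : ∀ d, Measurable (g d))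
    (hindep : iIndepFun g P)
    (hdist : ∀ d, P.map (g d) = gammaMeasure b 1)
    (X : Ω → ℝ)
    (hX : ∀ ω, X ω = 1 / (2 * Real.pi ^ 2) * ∑' d : ℕ, g d ω / ((d : ℝ) + 1 / 2) ^ 2)
    (t : ℝ) (ht : 0 ≤ t) :
    ∫ ω, Real.exp (-t * X ω) ∂P = Real.cosh (Real.sqrt (t / 2)) ^ (-b) := by
  set x : ℝ := √(t / 2) / π
  have hx : x ^ 2 = t / (2 * π ^ 2) := by
    rw [div_pow, sq_sqrt (by positivity)]
    ring
  set c : ℕ → ℝ := fun d => x ^ 2 / ((d : ℝ) + 1 / 2) ^ 2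
  have hc (d : ℕ) : 0 ≤ c d := by positivity
  have hc_summable : Summable c :=
    (((summable_one_div_nat_add_rpow (1 / 2) 2).2 one_lt_two).mul_left (x ^ 2)).congr fun d => by
      rw [abs_of_pos (by positivity), rpow_two, mul_one_div]
  have hg_nonneg : ∀ᵐ ω ∂P, ∀ d, 0 ≤ g d ω :=
    ae_all_iff.2 fun d => ae_of_ae_map (hmeas d).aemeasurable (hdist d ▸ ae_nonneg_gammaMeasure)
  have hY_summable : ∀ᵐ ω ∂P, Summable fun d => c d * g d ω :=
    ae_summable_const_mul_of_map_eq hmeas hdist hg_nonneg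
      (lintegral_ofReal_gammaMeasure_lt_top hb one_pos).ne hc hc_summable
  have htX (ω : Ω) : -t * X ω = -∑' d, c d * g d ω := by
    rw [hX ω, neg_mul, ← mul_assoc, ← tsum_mul_left]
    congr 2 with d
    simp only [c, hx]
    ring
  have hpartial (n : ℕ) : ∫ ω, exp (-∑ d ∈ range n, c d * g d ω) ∂P
      = ∏ d ∈ range n, (1 + c d) ^ (-b) := by
    simpa only [div_one] using hindep.integral_exp_neg_sum_mul_of_map_eq_gammaMeasure hmeas hdist
      hb one_pos (c := c) (fun d => by linarith [hc d]) (range n)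
  have hlimit := tendsto_integral_exp_neg_sum_range
    (fun d => ((hmeas d).const_mul (c d)).aemeasurable)
    (hg_nonneg.mono fun ω h d => mul_nonneg (hc d) (h d)) hY_summable
  have hprod := tendsto_euler_cosh_prod_rpow x (-b)
  rw [mul_div_cancel₀ _ pi_ne_zero] at hprod
  simp_rw [htX]
  exact tendsto_nhds_unique (hlimit.congr hpartial) hprod
end

section
/- For every real number a > 0, the pushforward under the map x ↦ 1/x of the probability measure on (0, ∞) whose density with respect to Lebesgue measure is λ ↦ (e^{a}/√(2π)) · λ^{−1/2} · exp(−(λ + a²/λ)/2) is the probability measure on (0, ∞) whose density with respect to Lebesgue measure is γ ↦ (2πγ³)^{−1/2} · exp(−a²(γ − 1/a)²/(2γ)). -/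
open MeasureTheory Real

/-!
Under `γ = 1/λ` Lebesgue measure on `(0, ∞)` acquires the Jacobian `γ⁻²`, so the pushforward has
density `γ⁻² · f(1/γ)` where `f` is the GIG density. Completing the square,
`a - (1/γ + a²γ)/2 = -a²(γ - 1/a)²/(2γ)`, and `γ⁻² · γ^{1/2} = γ^{-3/2}`, which is the inverse
Gaussian density.
-/

lemma map_inv_withDensity_Ioi (f : ℝ → ENNReal) :
    Measure.map Inv.inv ((volume.restrict (Set.Ioi (0 : ℝ))).withDensity f) =
      (volume.restrict (Set.Ioi 0)).withDensity fun y => ENNReal.ofReal (y ^ 2)⁻¹ * f y⁻¹ := by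
  ext s hs
  have hs' : MeasurableSet (s ∩ Set.Ioi 0) := hs.inter measurableSet_Ioi
  have hpre : Inv.inv ⁻¹' s ∩ Set.Ioi (0 : ℝ) = Inv.inv '' (s ∩ Set.Ioi 0) := by
    rw [Set.image_inv_eq_inv, Set.inter_inv]
    ext x; simp
  have hderiv : ∀ x ∈ s ∩ Set.Ioi (0 : ℝ),
      HasDerivWithinAt Inv.inv (-(x ^ 2)⁻¹) (s ∩ Set.Ioi 0) x := fun x hx =>
    (hasDerivAt_inv hx.2.ne').hasDerivWithinAt
  rw [Measure.map_apply measurable_inv hs, withDensity_apply _ (measurable_inv hs),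
    withDensity_apply _ hs, Measure.restrict_restrict (measurable_inv hs),
    Measure.restrict_restrict hs, hpre,
    lintegral_image_eq_lintegral_abs_deriv_mul hs' hderiv inv_injective.injOn]
  simp only [abs_neg, abs_inv, abs_pow, sq_abs]

lemma inverseGaussian_exponent_eq {a x : ℝ} (ha : a ≠ 0) (hx : x ≠ 0) :
    -a ^ 2 * (x - 1 / a) ^ 2 / (2 * x) = a + -(x⁻¹ + a ^ 2 / x⁻¹) / 2 := by
  field_simp
  ring

lemma two_pi_mul_pow_three_rpow_neg_half {x : ℝ} (hx : 0 < x) :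
    (2 * π * x ^ 3) ^ (-(1 : ℝ) / 2) = (x ^ 2)⁻¹ * x⁻¹ ^ (-(1 : ℝ) / 2) / √(2 * π) := by
  rw [neg_div, mul_rpow (by positivity) (by positivity), inv_rpow hx.le, ← rpow_neg hx.le,
    ← rpow_natCast, ← rpow_natCast, ← rpow_mul hx.le, ← rpow_neg_one (x ^ ((2 : ℕ) : ℝ)),
    ← rpow_mul hx.le, ← rpow_add hx, sqrt_eq_rpow, rpow_neg (by positivity) (1 / 2)]
  norm_num
  ring

lemma inv_sq_mul_gig_density_inv_eq {a x : ℝ} (ha : a ≠ 0) (hx : 0 < x) :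
    (x ^ 2)⁻¹ * (exp a / √(2 * π) * x⁻¹ ^ (-(1 : ℝ) / 2) * exp (-(x⁻¹ + a ^ 2 / x⁻¹) / 2)) =
      (2 * π * x ^ 3) ^ (-(1 : ℝ) / 2) * exp (-a ^ 2 * (x - 1 / a) ^ 2 / (2 * x)) := by
  rw [two_pi_mul_pow_three_rpow_neg_half hx, inverseGaussian_exponent_eq ha hx.ne', exp_add]
  ring

/-- The pushforward under `x ↦ 1/x` of the generalized inverse Gaussian distribution
`GIG(1/2, 1, a²)` (density `(e^a/√(2π)) λ^{-1/2} exp(-(λ + a²/λ)/2)` on `(0, ∞)`)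
is the inverse Gaussian distribution `IG(1/a, 1)`
(density `(2πγ³)^{-1/2} exp(-a²(γ - 1/a)²/(2γ))` on `(0, ∞)`). -/
theorem gig_reciprocal_is_inverse_gaussian (a : ℝ) (ha : 0 < a) :
    Measure.map (fun x : ℝ => 1 / x)
      ((volume.restrict (Set.Ioi (0 : ℝ))).withDensity fun l =>
        ENNReal.ofReal
          (Real.exp a / Real.sqrt (2 * Real.pi) * l ^ (-(1 : ℝ) / 2) *
            Real.exp (-(l + a ^ 2 / l) / 2))) =
      (volume.restrict (Set.Ioi (0 : ℝ))).withDensity fun γ =>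
        ENNReal.ofReal
          ((2 * Real.pi * γ ^ 3) ^ (-(1 : ℝ) / 2) *
            Real.exp (-a ^ 2 * (γ - 1 / a) ^ 2 / (2 * γ))) := by
  rw [show (fun x : ℝ => 1 / x) = Inv.inv from funext one_div, map_inv_withDensity_Ioi]
  refine withDensity_congr_ae ((ae_restrict_iff' measurableSet_Ioi).2 (.of_forall fun x hx => ?_))
  dsimp only
  rw [← ENNReal.ofReal_mul (by positivity), inv_sq_mul_gig_density_inv_eq ha.ne' hx]
end
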